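/- For every real parameter z: (a) the skew-symmetric bivector π_II on ℝ⁴ with components π_II^{01} = 0, π_II^{02} = z s¹s³, π_II^{03} = −z s¹s², π_II^{12} = z s⁰s³, π_II^{13} = −z s⁰s², π_II^{23} = 0 satisfies the Jacobi identity Σ_σ (π^{μσ}∂_σ π^{νρ} + π^{νσ}∂_σ π^{ρμ} + π^{ρσ}∂_σ π^{μν}) = 0 for all μ,ν,ρ ∈ {0,1,2,3}; and (b) the skew-symmetric bivector π_III on ℝ⁴ with components π_III^{01} = z(s⁰+s¹)s², π_III^{02} = −z(s⁰+s¹)s¹, π_III^{12} = −z(s⁰+s¹)s⁰, and π_III^{03} = π_III^{13} = π_III^{23} = 0 also satisfies this Jacobi identity. Hence each defines a Poisson bracket on ℝ⁴ (the Type II and Type III (A)dS/Minkowski Poisson homogeneous spacetimes in ambient coordinates). -/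

import Mathlib

namespace NCSTPoisson

noncomputable section

/-- The ambient spacetime coordinates `(s⁰,s¹,s²,s³)`. -/
abbrev S : Type := Fin 4 → ℝ

/-- The partial derivative `∂f/∂s^σ` at `s`. -/
def pd (σ : Fin 4) (f : S → ℝ) (s : S) : ℝ := fderiv ℝ f s (Pi.single σ 1)

/-- The Type I Poisson bivector on `ℝ⁴` in ambient coordinates:
`π^{01} = z(s⁰+s¹)s²`, `π^{02} = −z[(s⁰+s¹)s¹ + (s³)²] − z'(s⁰+s¹)s³`,
`π^{03} = z s²s³ + z'(s⁰+s¹)s²`, `π^{12} = −z[(s⁰+s¹)s⁰ − (s³)²] + z'(s⁰+s¹)s³`,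
`π^{13} = −z s²s³ − z'(s⁰+s¹)s²`, `π^{23} = z(s⁰+s¹)s³ + z'(s⁰+s¹)²`,
`π^{νμ} = −π^{μν}`. -/
def piI (z z' : ℝ) (s : S) : Fin 4 → Fin 4 → ℝ :=
  ![![0, z * (s 0 + s 1) * s 2,
      -(z * ((s 0 + s 1) * s 1 + (s 3) ^ 2)) - z' * (s 0 + s 1) * s 3,
      z * s 2 * s 3 + z' * (s 0 + s 1) * s 2],
    ![-(z * (s 0 + s 1) * s 2), 0,
      -(z * ((s 0 + s 1) * s 0 - (s 3) ^ 2)) + z' * (s 0 + s 1) * s 3,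
      -(z * s 2 * s 3) - z' * (s 0 + s 1) * s 2],
    ![-(-(z * ((s 0 + s 1) * s 1 + (s 3) ^ 2)) - z' * (s 0 + s 1) * s 3),
      -(-(z * ((s 0 + s 1) * s 0 - (s 3) ^ 2)) + z' * (s 0 + s 1) * s 3), 0,
      z * (s 0 + s 1) * s 3 + z' * (s 0 + s 1) ^ 2],
    ![-(z * s 2 * s 3 + z' * (s 0 + s 1) * s 2),
      -(-(z * s 2 * s 3) - z' * (s 0 + s 1) * s 2),
      -(z * (s 0 + s 1) * s 3 + z' * (s 0 + s 1) ^ 2), 0]]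

/-- The Type II Poisson bivector on `ℝ⁴`:
`π^{02} = z s¹s³`, `π^{03} = −z s¹s²`, `π^{12} = z s⁰s³`, `π^{13} = −z s⁰s²`,
`π^{01} = π^{23} = 0`, `π^{νμ} = −π^{μν}`. -/
def piII (z : ℝ) (s : S) : Fin 4 → Fin 4 → ℝ :=
  ![![0, 0, z * s 1 * s 3, -(z * s 1 * s 2)],
    ![0, 0, z * s 0 * s 3, -(z * s 0 * s 2)],
    ![-(z * s 1 * s 3), -(z * s 0 * s 3), 0, 0],
    ![z * s 1 * s 2, z * s 0 * s 2, 0, 0]]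

/-- The Type III Poisson bivector on `ℝ⁴`:
`π^{01} = z(s⁰+s¹)s²`, `π^{02} = −z(s⁰+s¹)s¹`, `π^{12} = −z(s⁰+s¹)s⁰`,
`π^{03} = π^{13} = π^{23} = 0`, `π^{νμ} = −π^{μν}`. -/
def piIII (z : ℝ) (s : S) : Fin 4 → Fin 4 → ℝ :=
  ![![0, z * (s 0 + s 1) * s 2, -(z * (s 0 + s 1) * s 1), 0],
    ![-(z * (s 0 + s 1) * s 2), 0, -(z * (s 0 + s 1) * s 0), 0],
    ![z * (s 0 + s 1) * s 1, z * (s 0 + s 1) * s 0, 0, 0],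
    ![0, 0, 0, 0]]

/-- The Jacobiator `Σ_σ (π^{μσ}∂_σ π^{νρ} + π^{νσ}∂_σ π^{ρμ} + π^{ρσ}∂_σ π^{μν})`
of a bivector field `π` on `ℝ⁴`. -/
def jacobiator (π : S → Fin 4 → Fin 4 → ℝ) (μ ν ρ : Fin 4) (s : S) : ℝ :=
  ∑ σ : Fin 4,
    (π s μ σ * pd σ (fun t => π t ν ρ) s
     + π s ν σ * pd σ (fun t => π t ρ μ) s
     + π s ρ σ * pd σ (fun t => π t μ ν) s)

/-!
The Jacobiator of a skew-symmetric bivector is totally antisymmetric in `(μ, ν, ρ)`, so it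
suffices to check it on the four triples `μ < ν < ρ`. There, since the entries of `π_II` and
`π_III` are quadratic polynomials in the coordinates, the Leibniz rule computes every partial
derivative and the identity becomes a polynomial identity in `s` and `z`.
-/

section PartialDerivative

variable {σ : Fin 4} {f g : S → ℝ} {s : S}

lemma pd_const (c : ℝ) : pd σ (fun _ => c) s = 0 := by
  simp [pd]

lemma pd_coord (i : Fin 4) : pd σ (fun t => t i) s = (Pi.single σ 1 : S) i := by
  simp [pd, fderiv_apply]

lemma pd_neg : pd σ (fun t => -f t) s = -pd σ f s := by
  simp [pd, fderiv_fun_neg]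

lemma pd_add (hf : DifferentiableAt ℝ f s) (hg : DifferentiableAt ℝ g s) :
    pd σ (fun t => f t + g t) s = pd σ f s + pd σ g s := by
  simp [pd, fderiv_fun_add hf hg]

lemma pd_mul (hf : DifferentiableAt ℝ f s) (hg : DifferentiableAt ℝ g s) :
    pd σ (fun t => f t * g t) s = pd σ f s * g s + f s * pd σ g s := by
  simp only [pd, fderiv_fun_mul hf hg, add_apply, smul_apply,
    smul_eq_mul]
  ring

end PartialDerivative

section Jacobiator

variable {π : S → Fin 4 → Fin 4 → ℝ}

lemma jacobiator_cyclic (μ ν ρ : Fin 4) (s : S) :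
    jacobiator π μ ν ρ s = jacobiator π ν ρ μ s :=
  Finset.sum_congr rfl fun _ _ => by ring

lemma jacobiator_swap (hπ : ∀ s μ ν, π s ν μ = -π s μ ν) (μ ν ρ : Fin 4) (s : S) :
    jacobiator π μ ρ ν s = -jacobiator π μ ν ρ s := by
  have hpd : ∀ σ α β, pd σ (fun t => π t β α) s = -pd σ (fun t => π t α β) s := by
    intro σ α β
    simp only [hπ _ α β, pd_neg]
  rw [jacobiator, jacobiator, ← Finset.sum_neg_distrib]
  refine Finset.sum_congr rfl fun σ _ => ?_
  rw [hpd σ ν ρ, hpd σ μ ν, hpd σ ρ μ]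
  ring

lemma eq_zero_of_cyclic_of_swap {J : Fin 4 → Fin 4 → Fin 4 → ℝ}
    (hcyc : ∀ μ ν ρ, J μ ν ρ = J ν ρ μ) (hswap : ∀ μ ν ρ, J μ ρ ν = -J μ ν ρ)
    (h012 : J 0 1 2 = 0) (h013 : J 0 1 3 = 0) (h023 : J 0 2 3 = 0) (h123 : J 1 2 3 = 0)
    (μ ν ρ : Fin 4) : J μ ν ρ = 0 := by
  have := hcyc μ ν ρ
  have := hcyc ν ρ μ
  have := hcyc μ ρ ν
  have := hcyc ρ ν μ
  have := hswap μ ν ρ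
  -- These relate `J` at all orderings of `(μ, ν, ρ)`; a repeated index forces `J = -J`.
  fin_cases μ <;> fin_cases ν <;> fin_cases ρ <;>
    simp only [Fin.zero_eta, Fin.mk_one, Fin.reduceFinMk, Fin.isValue] at * <;> linarith

theorem jacobiator_eq_zero_of_skew (hπ : ∀ s μ ν, π s ν μ = -π s μ ν)
    (h012 : ∀ s, jacobiator π 0 1 2 s = 0) (h013 : ∀ s, jacobiator π 0 1 3 s = 0)
    (h023 : ∀ s, jacobiator π 0 2 3 s = 0) (h123 : ∀ s, jacobiator π 1 2 3 s = 0)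
    (μ ν ρ : Fin 4) (s : S) : jacobiator π μ ν ρ s = 0 :=
  eq_zero_of_cyclic_of_swap (J := fun μ ν ρ => jacobiator π μ ν ρ s)
    (fun μ ν ρ => jacobiator_cyclic μ ν ρ s) (fun μ ν ρ => jacobiator_swap hπ μ ν ρ s)
    (h012 s) (h013 s) (h023 s) (h123 s) μ ν ρ

end Jacobiator

lemma piII_skew (z : ℝ) (s : S) (μ ν : Fin 4) : piII z s ν μ = -piII z s μ ν := by
  fin_cases μ <;> fin_cases ν <;> simp [piII]

lemma piIII_skew (z : ℝ) (s : S) (μ ν : Fin 4) : piIII z s ν μ = -piIII z s μ ν := by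
  fin_cases μ <;> fin_cases ν <;> simp [piIII]

theorem jacobiator_piII_eq_zero (z : ℝ) (μ ν ρ : Fin 4) (s : S) :
    jacobiator (piII z) μ ν ρ s = 0 := by
  refine jacobiator_eq_zero_of_skew (piII_skew z) ?_ ?_ ?_ ?_ μ ν ρ s <;> intro s <;>
    simp (disch := fun_prop) only [jacobiator, piII, Fin.sum_univ_four, Matrix.cons_val,
      pd_mul, pd_neg, pd_const, pd_coord, Pi.single_apply, Fin.isValue, Fin.reduceEq,
      ↓reduceIte] <;>
    ring

theorem jacobiator_piIII_eq_zero (z : ℝ) (μ ν ρ : Fin 4) (s : S) :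
    jacobiator (piIII z) μ ν ρ s = 0 := by
  refine jacobiator_eq_zero_of_skew (piIII_skew z) ?_ ?_ ?_ ?_ μ ν ρ s <;> intro s <;>
    simp (disch := fun_prop) only [jacobiator, piIII, Fin.sum_univ_four, Matrix.cons_val,
      pd_add, pd_mul, pd_neg, pd_const, pd_coord, Pi.single_apply, Fin.isValue, Fin.reduceEq,
      ↓reduceIte] <;>
    ring

/-- The Type II and Type III bivectors `π_II`, `π_III` are
skew-symmetric and satisfy the Jacobi identity, hence each defines a Poisson bracket
on `ℝ⁴`. -/
theorem piII_piIII_skew_and_jacobi (z : ℝ) :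
    (∀ (s : S) (μ ν : Fin 4), piII z s ν μ = -piII z s μ ν) ∧
    (∀ (μ ν ρ : Fin 4) (s : S), jacobiator (piII z) μ ν ρ s = 0) ∧
    (∀ (s : S) (μ ν : Fin 4), piIII z s ν μ = -piIII z s μ ν) ∧
    (∀ (μ ν ρ : Fin 4) (s : S), jacobiator (piIII z) μ ν ρ s = 0) :=
  ⟨piII_skew z, jacobiator_piII_eq_zero z, piIII_skew z, jacobiator_piIII_eq_zero z⟩

end
end NCSTPoisson
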